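/- Let T^α_I be a general compatible embedding from NN({m_l}_{l=0}^L) to a wider NN({m'_l}_{l=0}^L), with total index mapping I and coefficients α satisfying compatibility conditions I and II (with auxiliary reals β and effective biases b_*). Then for every parameter θ, writing θ' = T^α_I(θ), for every layer l ∈ [L], every index i ∈ [m'_l], and every input x: if I_l(i) ≠ 0 then (f^[l]_{θ'}(x))_i = (f^[l]_θ(x))_{I_l(i)}, and if I_l(i) = 0 then (f^[l]_{θ'}(x))_i = σ((b_*^[l])_i), a constant independent of x; in particular the output functions coincide, f_{θ'}(x) = f_θ(x) for all x. -/

import Mathlib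

namespace EmbeddingPrinciple

/-- Parameters of a fully-connected NN: `(θ l).1 i j` is the weight `W^{[l+1]}_{ij}`
and `(θ l).2 i` is the bias `b^{[l+1]}_i` (the paper's layer `l` corresponds to index `l-1`).
Only the coordinates below the widths are meaningful for a concrete architecture. -/
abbrev NNParams : Type := ℕ → (ℕ → ℕ → ℝ) × (ℕ → ℝ)

/-- Feature vectors `f^{[l]}` (entrywise activation `σ`); `m` is the width function. -/
noncomputable def feat (σ : ℝ → ℝ) (m : ℕ → ℕ) (θ : NNParams) (x : ℕ → ℝ) : ℕ → ℕ → ℝ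
  | 0 => x
  | l + 1 => fun i =>
      σ ((∑ j ∈ Finset.range (m l), (θ l).1 i j * feat σ m θ x l j) + (θ l).2 i)

/-- Pre-activation of layer `l+1`: `W^{[l+1]} f^{[l]} + b^{[l+1]}`. -/
noncomputable def preact (σ : ℝ → ℝ) (m : ℕ → ℕ) (θ : NNParams) (x : ℕ → ℝ) (l i : ℕ) : ℝ :=
  (∑ j ∈ Finset.range (m l), (θ l).1 i j * feat σ m θ x l j) + (θ l).2 i

/-- Output `f_θ` of the `(K+1)`-layer network (the paper's `L` is `K+1`). -/
noncomputable def nnOut (σ : ℝ → ℝ) (m : ℕ → ℕ) (K : ℕ) (θ : NNParams) (x : ℕ → ℝ) :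
    ℕ → ℝ := fun i => preact σ m θ x K i

/-- Feature gradient `g^{[l+1]} = σ'(W^{[l+1]} f^{[l]} + b^{[l+1]})`. -/
noncomputable def gFeat (σ : ℝ → ℝ) (m : ℕ → ℕ) (θ : NNParams) (x : ℕ → ℝ) (l i : ℕ) : ℝ :=
  deriv σ (preact σ m θ x l i)

/-- Output truncated to the valid output coordinates. -/
noncomputable def truncOut (σ : ℝ → ℝ) (m : ℕ → ℕ) (K : ℕ) (θ : NNParams) (x : ℕ → ℝ) :
    ℕ → ℝ := fun i => if i < m (K + 1) then nnOut σ m K θ x i else 0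

/-- Empirical risk `R_S(θ) = (1/n) ∑ᵢ ℓ(f_θ(xᵢ), yᵢ)`. -/
noncomputable def risk (σ : ℝ → ℝ) (m : ℕ → ℕ) (K : ℕ)
    (loss : (ℕ → ℝ) → (ℕ → ℝ) → ℝ) {n : ℕ} (X Y : Fin n → ℕ → ℝ) (θ : NNParams) : ℝ :=
  (n : ℝ)⁻¹ * ∑ a : Fin n, loss (truncOut σ m K θ (X a)) (Y a)

/-- Update a single weight coordinate. -/
def updW (θ : NNParams) (l i j : ℕ) (t : ℝ) : NNParams := fun l' =>
  if l' = l then ((fun i' j' => if i' = i ∧ j' = j then t else (θ l).1 i' j'), (θ l).2)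
  else θ l'

/-- Update a single bias coordinate. -/
def updB (θ : NNParams) (l i : ℕ) (t : ℝ) : NNParams := fun l' =>
  if l' = l then ((θ l).1, fun i' => if i' = i then t else (θ l).2 i') else θ l'

/-- `θ` is a critical point of `R` : all partial derivatives with respect to the valid
coordinates of the `(K+1)`-layer architecture with width function `m` vanish. -/
def IsCritical (R : NNParams → ℝ) (m : ℕ → ℕ) (K : ℕ) (θ : NNParams) : Prop :=
  (∀ l, l ≤ K → ∀ i, i < m (l + 1) → ∀ j, j < m l →
      deriv (fun t => R (updW θ l i j t)) ((θ l).1 i j) = 0) ∧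
  (∀ l, l ≤ K → ∀ i, i < m (l + 1) →
      deriv (fun t => R (updB θ l i t)) ((θ l).2 i) = 0)

/-- Equality of two parameter tuples on all valid coordinates of the architecture. -/
def ParamEqOn (m : ℕ → ℕ) (K : ℕ) (θ₁ θ₂ : NNParams) : Prop :=
  ∀ l, l ≤ K → ∀ i, i < m (l + 1) →
    (∀ j, j < m l → (θ₁ l).1 i j = (θ₂ l).1 i j) ∧ (θ₁ l).2 i = (θ₂ l).2 i

/-- Error vectors by reversed index: `errRev … t = z^{[K+1-t]}`, where `z^{[K+1]} = ∇ℓ`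
(represented by the function `dloss`) and `z^{[l]} = (W^{[l+1]})ᵀ (z^{[l+1]} ∘ g^{[l+1]})`. -/
noncomputable def errRev (σ : ℝ → ℝ) (m : ℕ → ℕ) (K : ℕ) (θ : NNParams)
    (dloss : (ℕ → ℝ) → (ℕ → ℝ) → ℕ → ℝ) (x y : ℕ → ℝ) : ℕ → ℕ → ℝ
  | 0 => dloss (truncOut σ m K θ x) y
  | t + 1 => fun j =>
      ∑ i ∈ Finset.range (m (K + 1 - t)),
        (θ (K - t)).1 i j *
          (errRev σ m K θ dloss x y t i * (if t = 0 then 1 else gFeat σ m θ x (K - t) i))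

/-- `e^{[l]} = z^{[l]} ∘ g^{[l]}` (with `g^{[K+1]} = 1`). -/
noncomputable def errE (σ : ℝ → ℝ) (m : ℕ → ℕ) (K : ℕ) (θ : NNParams)
    (dloss : (ℕ → ℝ) → (ℕ → ℝ) → ℕ → ℝ) (x y : ℕ → ℝ) (l i : ℕ) : ℝ :=
  errRev σ m K θ dloss x y (K + 1 - l) i *
    (if l = K + 1 then 1 else gFeat σ m θ x (l - 1) i)

/-- Differentiability of the loss in its first argument (on each finite-dimensional
coordinate block). -/
def LossDiff (loss : (ℕ → ℝ) → (ℕ → ℝ) → ℝ) : Prop :=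
  ∀ (y : ℕ → ℝ) (d : ℕ),
    Differentiable ℝ (fun u : Fin d → ℝ => loss (fun i => if h : i < d then u ⟨i, h⟩ else 0) y)

/-- Widths after adding one neuron in the paper's layer `p+1`. -/
def widen (m : ℕ → ℕ) (p : ℕ) : ℕ → ℕ := fun l => if l = p + 1 then m (p + 1) + 1 else m l

/-- One-step null embedding `T^α_{l,0}` at the paper's layer `l = p+1`. -/
def nullEmb (m : ℕ → ℕ) (p : ℕ) (α : ℝ) (θ : NNParams) : NNParams := fun l =>
  if l = p then
    ((fun i j => if i = m (p + 1) then 0 else (θ p).1 i j),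
     (fun i => if i = m (p + 1) then α else (θ p).2 i))
  else if l = p + 1 then
    ((fun i j => if j = m (p + 1) then 0 else (θ (p + 1)).1 i j), (θ (p + 1)).2)
  else θ l

/-- One-step splitting embedding `T^α_{l,s}` at the paper's layer `l = p+1`,
splitting neuron `s`. -/
def splitEmb (m : ℕ → ℕ) (p s : ℕ) (α : ℝ) (θ : NNParams) : NNParams := fun l =>
  if l = p then
    ((fun i j => if i = m (p + 1) then (θ p).1 s j else (θ p).1 i j),
     (fun i => if i = m (p + 1) then (θ p).2 s else (θ p).2 i))
  else if l = p + 1 then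
    ((fun i j =>
        if j = s then (1 - α) * (θ (p + 1)).1 i s
        else if j = m (p + 1) then α * (θ (p + 1)).1 i s
        else (θ (p + 1)).1 i j),
     (θ (p + 1)).2)
  else θ l

/-- The general compatible embedding `T^α_I` determined by a pull-back index mapping `I`
(`none` plays the role of the paper's index `0`), coefficient matrices `A` (the paper's
`α^{[l]}`) and bias coefficients `Ab` (the paper's `α_b^{[l]}`), using the paper's
conventions `(W^{[l]})_{0j} = (W^{[l]})_{i0} = 1` and `(b^{[l]})_0 = 0`. -/
noncomputable def genEmb (I : ℕ → ℕ → Option ℕ) (A : ℕ → ℕ → ℕ → ℝ) (Ab : ℕ → ℕ → ℝ)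
    (θ : NNParams) : NNParams := fun l =>
  ((fun i j =>
      A (l + 1) i j *
        (match I (l + 1) i, I l j with
          | some a, some b => (θ l).1 a b
          | _, _ => 1)),
   (fun i => Ab (l + 1) i +
      (match I (l + 1) i with
        | some a => (θ l).2 a
        | none => 0)))

/-!
Induction on the layers. Split the pre-activation of a wide neuron `i` over the fibres
`I_l⁻¹(s)` and the null neurons `I_l⁻¹(0)`. On the fibre of `s` every feature equals the narrow
feature `s` and every weight is `α_ij` times one narrow weight, so the forward condition
collapses the fibre to the narrow term (or to `0` when `i` is null). The null neurons carry
the constants `σ(b_*)`, and condition II turns their contribution plus the bias coefficient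
into `0`, resp. `b_*`.
-/

open Finset

theorem sum_eq_sum_fiberwise_some_add_sum_none {ι κ M : Type*} [AddCommMonoid M]
    [DecidableEq κ] {s : Finset ι} {t : Finset κ} {g : ι → Option κ}
    (h : ∀ j ∈ s, ∀ k, g j = some k → k ∈ t) (f : ι → M) :
    ∑ j ∈ s, f j =
      (∑ k ∈ t, ∑ j ∈ s with g j = some k, f j) + ∑ j ∈ s with g j = none, f j := by
  have hmaps : ∀ j ∈ s, g j ∈ t.insertNone := by
    intro j hj
    cases hg : g j with
    | none => exact none_mem_insertNone
    | some k => exact some_mem_insertNone.mpr (h j hj k hg)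
  rw [← sum_fiberwise_of_maps_to hmaps, sum_insertNone, add_comm]

variable {σ : ℝ → ℝ} {m m' : ℕ → ℕ} {I : ℕ → ℕ → Option ℕ} {A : ℕ → ℕ → ℕ → ℝ}
  {Ab : ℕ → ℕ → ℝ} {bstar : ℕ → ℕ → ℝ} {θ : NNParams} {x : ℕ → ℝ} {l i j : ℕ}

theorem genEmb_weight_of_some {b : ℕ} (hj : I l j = some b) :
    (genEmb I A Ab θ l).1 i j = A (l + 1) i j * (I (l + 1) i).elim 1 fun a => (θ l).1 a b := by
  cases hi : I (l + 1) i <;> simp [genEmb, hi, hj]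

theorem genEmb_weight_of_none (hj : I l j = none) :
    (genEmb I A Ab θ l).1 i j = A (l + 1) i j := by
  cases hi : I (l + 1) i <;> simp [genEmb, hi, hj]

theorem genEmb_bias :
    (genEmb I A Ab θ l).2 i = Ab (l + 1) i + (I (l + 1) i).elim 0 fun a => (θ l).2 a := by
  cases hi : I (l + 1) i <;> simp [genEmb, hi]

/-- The feature that neuron `j` of layer `l` of the embedded network is meant to carry. -/
noncomputable def liftFeat (σ : ℝ → ℝ) (m : ℕ → ℕ) (θ : NNParams) (x : ℕ → ℝ)
    (I : ℕ → ℕ → Option ℕ) (bstar : ℕ → ℕ → ℝ) (l j : ℕ) : ℝ :=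
  (I l j).elim (σ (bstar l j)) (feat σ m θ x l)

/-- The forward half of compatibility condition I and condition II between the paper's
layers `l` and `l + 1`. -/
def LayerCompatible (σ : ℝ → ℝ) (m m' : ℕ → ℕ) (I : ℕ → ℕ → Option ℕ)
    (A : ℕ → ℕ → ℕ → ℝ) (Ab : ℕ → ℕ → ℝ) (bstar : ℕ → ℕ → ℝ) (l : ℕ) : Prop :=
  ∀ i < m' (l + 1),
    (∀ s < m l, ∑ j ∈ range (m' l) with I l j = some s, A (l + 1) i j =
        (I (l + 1) i).elim 0 fun _ => 1) ∧
    (∑ j ∈ range (m' l) with I l j = none, A (l + 1) i j * σ (bstar l j)) + Ab (l + 1) i =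
        (I (l + 1) i).elim (bstar (l + 1) i) fun _ => 0

theorem preact_genEmb (hval : ∀ j < m' l, ∀ s, I l j = some s → s < m l)
    (hcompat : LayerCompatible σ m m' I A Ab bstar l) (hi : i < m' (l + 1))
    (hfeat : ∀ j < m' l, feat σ m' (genEmb I A Ab θ) x l j = liftFeat σ m θ x I bstar l j) :
    preact σ m' (genEmb I A Ab θ) x l i =
      (I (l + 1) i).elim (bstar (l + 1) i) (preact σ m θ x l) := by
  obtain ⟨hfiber, hbias⟩ := hcompat i hi
  have hmaps : ∀ j ∈ range (m' l), ∀ s, I l j = some s → s ∈ range (m l) := fun j hj s hs =>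
    mem_range.mpr (hval j (mem_range.mp hj) s hs)
  have hfiber_sum : ∀ s ∈ range (m l),
      ∑ j ∈ range (m' l) with I l j = some s,
          (genEmb I A Ab θ l).1 i j * feat σ m' (genEmb I A Ab θ) x l j =
        (I (l + 1) i).elim 0 fun a => (θ l).1 a s * feat σ m θ x l s := by
    intro s hs
    calc _ = ∑ j ∈ range (m' l) with I l j = some s,
          A (l + 1) i j * ((I (l + 1) i).elim 1 fun a => (θ l).1 a s) * feat σ m θ x l s := by
          refine sum_congr rfl fun j hj => ?_
          obtain ⟨hj, hjs⟩ := mem_filter.mp hj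
          rw [genEmb_weight_of_some hjs, hfeat j (mem_range.mp hj), liftFeat, hjs,
            Option.elim_some]
      _ = _ := by
          rw [← sum_mul, ← sum_mul, hfiber s (mem_range.mp hs)]
          cases I (l + 1) i <;> simp
  have hnull_sum : ∑ j ∈ range (m' l) with I l j = none,
      (genEmb I A Ab θ l).1 i j * feat σ m' (genEmb I A Ab θ) x l j =
        ∑ j ∈ range (m' l) with I l j = none, A (l + 1) i j * σ (bstar l j) := by
    refine sum_congr rfl fun j hj => ?_
    obtain ⟨hj, hjn⟩ := mem_filter.mp hj
    rw [genEmb_weight_of_none hjn, hfeat j (mem_range.mp hj), liftFeat, hjn, Option.elim_none]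
  rw [preact, sum_eq_sum_fiberwise_some_add_sum_none hmaps, sum_congr rfl hfiber_sum,
    hnull_sum, genEmb_bias]
  cases ha : I (l + 1) i <;> simp only [ha, Option.elim_none, Option.elim_some] at hbias ⊢
  · simp only [sum_const_zero]
    linarith
  · rw [preact]
    linarith

theorem feat_genEmb_eq_liftFeat {K : ℕ} (hI0 : ∀ j < m' 0, I 0 j = some j)
    (hval : ∀ l < K, ∀ j < m' l, ∀ s, I l j = some s → s < m l)
    (hcompat : ∀ l < K, LayerCompatible σ m m' I A Ab bstar l) :
    ∀ l ≤ K, ∀ j < m' l, feat σ m' (genEmb I A Ab θ) x l j = liftFeat σ m θ x I bstar l j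
  | 0, _, j, hj => by simp [liftFeat, feat, hI0 j hj]
  | l + 1, hl, j, hj => by
    have hpre := preact_genEmb (θ := θ) (x := x) (hval l (by omega)) (hcompat l (by omega)) hj
      (feat_genEmb_eq_liftFeat hI0 hval hcompat l (by omega))
    change σ (preact _ _ _ _ _ _) = _
    rw [hpre, liftFeat]
    cases I (l + 1) j <;> rfl

theorem general_compatible_embedding_output_preserving_general
    (K : ℕ) (m m' : ℕ → ℕ) (σ : ℝ → ℝ)
    (hLtop : m' (K + 1) = m (K + 1))
    -- total index mapping
    (I : ℕ → ℕ → Option ℕ)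
    (hI0 : ∀ j, j < m' 0 → I 0 j = some j)
    (hIL : ∀ j, j < m' (K + 1) → I (K + 1) j = some j)
    (hIval : ∀ l, l ≤ K + 1 → ∀ j, j < m' l → ∀ s, I l j = some s → s < m l)
    (A : ℕ → ℕ → ℕ → ℝ) (Ab : ℕ → ℕ → ℝ) (bstar : ℕ → ℕ → ℝ)
    -- compatibility conditions I
    (hfwd : ∀ l, 1 ≤ l → l ≤ K + 1 → ∀ i, i < m' l → ∀ s, s < m (l - 1) →
        (I l i ≠ none →
          ∑ j ∈ (Finset.range (m' (l - 1))).filter (fun j => I (l - 1) j = some s),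
            A l i j = 1) ∧
        (I l i = none →
          ∑ j ∈ (Finset.range (m' (l - 1))).filter (fun j => I (l - 1) j = some s),
            A l i j = 0))
    -- compatibility conditions II
    (hnull : ∀ l, 1 ≤ l → l ≤ K + 1 → ∀ i, i < m' l → I l i = none →
        (∑ j ∈ (Finset.range (m' (l - 1))).filter (fun j => I (l - 1) j = none),
          A l i j * σ (bstar (l - 1) j)) + Ab l i = bstar l i)
    (heff : ∀ l, 1 ≤ l → l ≤ K + 1 → ∀ i, i < m' l → I l i ≠ none →
        (∑ j ∈ (Finset.range (m' (l - 1))).filter (fun j => I (l - 1) j = none),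
          A l i j * σ (bstar (l - 1) j)) + Ab l i = 0)
    (θ : NNParams) (x : ℕ → ℝ) :
    (∀ l, 1 ≤ l → l ≤ K → ∀ i, i < m' l →
      (∀ s, I l i = some s →
          feat σ m' (genEmb I A Ab θ) x l i = feat σ m θ x l s) ∧
      (I l i = none →
          feat σ m' (genEmb I A Ab θ) x l i = σ (bstar l i))) ∧
    ∀ i, i < m (K + 1) →
      nnOut σ m' K (genEmb I A Ab θ) x i = nnOut σ m K θ x i := by
  have hcompat : ∀ l ≤ K, LayerCompatible σ m m' I A Ab bstar l := by
    intro l hl i hi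
    have hfwd_l := hfwd (l + 1) (by omega) (by omega) i hi
    have hnull_l := hnull (l + 1) (by omega) (by omega) i hi
    have heff_l := heff (l + 1) (by omega) (by omega) i hi
    simp only [Nat.add_sub_cancel] at hfwd_l hnull_l heff_l
    cases ha : I (l + 1) i
    · exact ⟨fun s hs => (hfwd_l s hs).2 ha, hnull_l ha⟩
    · exact ⟨fun s hs => (hfwd_l s hs).1 (by simp [ha]), heff_l (by simp [ha])⟩
  have hfeat := feat_genEmb_eq_liftFeat (θ := θ) (x := x) hI0 (fun l _ => hIval l (by omega))
    fun l hl => hcompat l hl.le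
  refine ⟨fun l _ hl i hi => ⟨fun s hs => ?_, fun hn => ?_⟩, fun i hi => ?_⟩
  · rw [hfeat l hl i hi, liftFeat, hs, Option.elim_some]
  · rw [hfeat l hl i hi, liftFeat, hn, Option.elim_none]
  · have hi' : i < m' (K + 1) := hLtop ▸ hi
    simpa [nnOut, hIL i hi'] using preact_genEmb (hIval K (by omega)) (hcompat K le_rfl) hi' (hfeat K le_rfl)

/-- output preservation of the general compatible embedding: features of
effective neurons reproduce the narrow network's features, null neurons output the
constant `σ((b_*)_i)`, and the output functions coincide. -/
theorem general_compatible_embedding_output_preserving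
    (K : ℕ) (hK : 1 ≤ K) (m m' : ℕ → ℕ) (σ : ℝ → ℝ)
    (h0 : m' 0 = m 0) (hLtop : m' (K + 1) = m (K + 1)) (hge : ∀ l, m l ≤ m' l)
    -- total index mapping
    (I : ℕ → ℕ → Option ℕ)
    (hI0 : ∀ j, j < m' 0 → I 0 j = some j)
    (hIL : ∀ j, j < m' (K + 1) → I (K + 1) j = some j)
    (hIval : ∀ l, l ≤ K + 1 → ∀ j, j < m' l → ∀ s, I l j = some s → s < m l)
    (hItot : ∀ l, l ≤ K + 1 → ∀ s, s < m l → ∃ j, j < m' l ∧ I l j = some s)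
    (A : ℕ → ℕ → ℕ → ℝ) (Ab : ℕ → ℕ → ℝ) (β : ℕ → ℕ → ℝ) (bstar : ℕ → ℕ → ℝ)
    -- compatibility conditions I
    (hβtop : ∀ k, k < m' (K + 1) → β (K + 1) k = 1)
    (hfwd : ∀ l, 1 ≤ l → l ≤ K + 1 → ∀ i, i < m' l → ∀ s, s < m (l - 1) →
        (I l i ≠ none →
          ∑ j ∈ (Finset.range (m' (l - 1))).filter (fun j => I (l - 1) j = some s),
            A l i j = 1) ∧
        (I l i = none →
          ∑ j ∈ (Finset.range (m' (l - 1))).filter (fun j => I (l - 1) j = some s),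
            A l i j = 0))
    (hbwd : ∀ l, 1 ≤ l → l ≤ K + 1 → ∀ j, j < m' (l - 1) → ∀ k, k < m l →
        (∀ s, I (l - 1) j = some s →
          ∑ i ∈ (Finset.range (m' l)).filter (fun i => I l i = some k),
            β l i * A l i j = β (l - 1) j) ∧
        (I (l - 1) j = none →
          ∑ i ∈ (Finset.range (m' l)).filter (fun i => I l i = some k),
            β l i * A l i j = 0))
    -- compatibility conditions II
    (hAb0 : ∀ l, 1 ≤ l → l ≤ K + 1 → ∀ i, i < m' l → I l i ≠ none → Ab l i = 0)
    (hnull : ∀ l, 1 ≤ l → l ≤ K + 1 → ∀ i, i < m' l → I l i = none →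
        (∑ j ∈ (Finset.range (m' (l - 1))).filter (fun j => I (l - 1) j = none),
          A l i j * σ (bstar (l - 1) j)) + Ab l i = bstar l i)
    (heff : ∀ l, 1 ≤ l → l ≤ K + 1 → ∀ i, i < m' l → I l i ≠ none →
        (∑ j ∈ (Finset.range (m' (l - 1))).filter (fun j => I (l - 1) j = none),
          A l i j * σ (bstar (l - 1) j)) + Ab l i = 0)
    (θ : NNParams) (x : ℕ → ℝ) :
    (∀ l, 1 ≤ l → l ≤ K → ∀ i, i < m' l →
      (∀ s, I l i = some s →
          feat σ m' (genEmb I A Ab θ) x l i = feat σ m θ x l s) ∧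
      (I l i = none →
          feat σ m' (genEmb I A Ab θ) x l i = σ (bstar l i))) ∧
    ∀ i, i < m (K + 1) →
      nnOut σ m' K (genEmb I A Ab θ) x i = nnOut σ m K θ x i :=
  general_compatible_embedding_output_preserving_general K m m' σ hLtop I hI0 hIL hIval A Ab bstar
    hfwd hnull heff θ x

end EmbeddingPrinciple
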